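/- arXiv:1503.05886 — 3 statements merged into one kernel-verified Lean document; each statement's English description precedes it below -/
import Mathlib

section
/- Let 0 → L₁ → E →^π L₂ → 0 be a holomorphic extension of line bundles over a closed Riemann surface with deg(L₂) > deg(L₁), corresponding to a class [η] ∈ H^{0,1}(L₂* ⊗ L₁). Then div(E) = max{deg(L₁), deg(L₂)} if and only if [η] = 0, i.e., if and only if the extension splits holomorphically. -/
/-!
STATEMENT 7 (div(E) = max{deg L₁, deg L₂} iff the extension splits,
when deg L₂ > deg L₁).  Concrete model over the Riemann sphere: as in the
paper, a holomorphic extension 0 → O(d₁) → E → O(d₂) → 0 is glued over ℂ* by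
T(z) = [[z^{d₁}, a(z)], [0, z^{d₂}]] with a holomorphic on ℂ*.  Its Dolbeault
(≅ Čech) class [η] ∈ H^{0,1}(O(d₁-d₂)) vanishes — equivalently the extension
splits holomorphically — iff the off-diagonal term is a coboundary:
a(z) = z^{d₂}·b_N(z) − z^{d₁}·b_S(1/z) on ℂ* with b_N, b_S entire.
div(E) is the supremum of the degrees of holomorphic line subbundles of E.
-/

/-- `E` glued by `[[z^{d₁}, a(z)], [0, z^{d₂}]]` admits a holomorphic line
subbundle of degree `d`. -/
def HasLineSubbundleOfDeg (d₁ d₂ : ℤ) (a : ℂ → ℂ) (d : ℤ) : Prop :=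
  ∃ sN1 sN2 sS1 sS2 : ℂ → ℂ,
    Differentiable ℂ sN1 ∧ Differentiable ℂ sN2 ∧
    Differentiable ℂ sS1 ∧ Differentiable ℂ sS2 ∧
    (∀ z : ℂ, sN1 z ≠ 0 ∨ sN2 z ≠ 0) ∧
    (∀ z : ℂ, sS1 z ≠ 0 ∨ sS2 z ≠ 0) ∧
    (∀ z : ℂ, z ≠ 0 →
      sN1 z = z ^ (-d) * (z ^ d₁ * sS1 z⁻¹ + a z * sS2 z⁻¹) ∧
      sN2 z = z ^ (-d) * (z ^ d₂ * sS2 z⁻¹))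

/-!
A line subbundle `J ⊂ E` of degree `d` with `d > d₁` is not contained in `L₁`, so its projection
to `L₂` is a nonzero holomorphic section of `O(d₂ - d)`. By Liouville such a section exists only
if `d ≤ d₂`, and for `d = d₂` it is a nonzero constant, which turns `J` into a holomorphic
splitting of `E → L₂`. Since `L₁` itself has degree `d₁`, `div(E) = d₂` exactly when some
subbundle of degree `d₂` exists, i.e. exactly when the extension splits.
-/

open Filter Topology

/-- The off-diagonal term of the gluing matrix is a Čech coboundary. -/
def SplitsHolomorphically (d₁ d₂ : ℤ) (a : ℂ → ℂ) : Prop :=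
  ∃ bN bS : ℂ → ℂ, Differentiable ℂ bN ∧ Differentiable ℂ bS ∧
    ∀ z : ℂ, z ≠ 0 → a z = z ^ d₂ * bN z - z ^ d₁ * bS z⁻¹

lemma zpow_neg_mul_zpow_mul {G₀ : Type*} [GroupWithZero G₀] {z : G₀} (hz : z ≠ 0)
    (d e : ℤ) (x : G₀) : z ^ (-d) * (z ^ e * x) = z ^ (e - d) * x := by
  rw [← mul_assoc, ← zpow_add₀ hz, neg_add_eq_sub]

section Liouville

variable {f g : ℂ → ℂ}

lemma tendsto_comp_inv_cocompact (hg : ContinuousAt g 0) :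
    Tendsto (fun z : ℂ => g z⁻¹) (cocompact ℂ) (𝓝 (g 0)) := by
  rw [← Metric.cobounded_eq_cocompact]
  exact hg.tendsto.comp tendsto_inv₀_cobounded

lemma tendsto_zpow_cocompact_of_neg {k : ℤ} (hk : k < 0) :
    Tendsto (fun z : ℂ => z ^ k) (cocompact ℂ) (𝓝 0) := by
  lift -k to ℕ using by omega with n hn
  have hpos : n ≠ 0 := by omega
  have h := (tendsto_comp_inv_cocompact (g := fun w : ℂ => w ^ n) (by fun_prop))
  simp only [zero_pow hpos, inv_pow] at h
  convert h using 2 with z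
  rw [← zpow_natCast, hn, zpow_neg, inv_inv]

lemma Differentiable.eq_zero_of_eq_zpow_mul_comp_inv (hf : Differentiable ℂ f)
    (hg : ContinuousAt g 0) {k : ℤ} (hk : k < 0) (h : ∀ z : ℂ, z ≠ 0 → f z = z ^ k * g z⁻¹)
    (z : ℂ) : f z = 0 := by
  refine hf.apply_eq_of_tendsto_cocompact z ?_
  have hlim := (tendsto_zpow_cocompact_of_neg hk).mul (tendsto_comp_inv_cocompact hg)
  rw [zero_mul] at hlim
  refine hlim.congr' ?_
  filter_upwards [(isCompact_singleton (x := (0 : ℂ))).compl_mem_cocompact] with w hw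
    using (h w hw).symm

lemma Differentiable.eq_of_eq_comp_inv (hf : Differentiable ℂ f) (hg : ContinuousAt g 0)
    (h : ∀ z : ℂ, z ≠ 0 → f z = g z⁻¹) (z : ℂ) : f z = g 0 := by
  refine hf.apply_eq_of_tendsto_cocompact z ((tendsto_comp_inv_cocompact hg).congr' ?_)
  filter_upwards [(isCompact_singleton (x := (0 : ℂ))).compl_mem_cocompact] with w hw
    using (h w hw).symm

end Liouville

lemma hasLineSubbundleOfDeg_left (d₁ d₂ : ℤ) (a : ℂ → ℂ) : HasLineSubbundleOfDeg d₁ d₂ a d₁ :=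
  ⟨fun _ => 1, fun _ => 0, fun _ => 1, fun _ => 0, differentiable_const _,
    differentiable_const _, differentiable_const _, differentiable_const _,
    fun _ => .inl one_ne_zero, fun _ => .inl one_ne_zero, fun z hz => by
      simp [zpow_ne_zero _ hz]⟩

lemma SplitsHolomorphically.hasLineSubbundleOfDeg {d₁ d₂ : ℤ} {a : ℂ → ℂ}
    (h : SplitsHolomorphically d₁ d₂ a) : HasLineSubbundleOfDeg d₁ d₂ a d₂ := by
  obtain ⟨bN, bS, hbN, hbS, hab⟩ := h
  refine ⟨bN, fun _ => 1, bS, fun _ => 1, hbN, differentiable_const _, hbS,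
    differentiable_const _, fun _ => .inr one_ne_zero, fun _ => .inr one_ne_zero,
    fun z hz => ⟨?_, ?_⟩⟩
  · rw [hab z hz, mul_one, add_sub_cancel, zpow_neg_mul_zpow_mul hz, sub_self, zpow_zero,
      one_mul]
  · rw [mul_one, ← zpow_add₀ hz, neg_add_cancel, zpow_zero]

section Subbundle

variable {d₁ d₂ d : ℤ} {a sN1 sN2 sS1 sS2 : ℂ → ℂ}

/-- If the `L₂`-component of a line subbundle of degree `d > d₁` vanished, the subbundle would
be a nonvanishing section of `O(d₁ - d)`, which Liouville rules out. -/
lemma north_snd_ne_zero_of_lt (hd : d₁ < d) (hN1 : Differentiable ℂ sN1)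
    (hS1 : Differentiable ℂ sS1) (hNv : sN1 0 ≠ 0 ∨ sN2 0 ≠ 0)
    (hrel : ∀ z : ℂ, z ≠ 0 →
      sN1 z = z ^ (-d) * (z ^ d₁ * sS1 z⁻¹ + a z * sS2 z⁻¹) ∧
      sN2 z = z ^ (-d) * (z ^ d₂ * sS2 z⁻¹)) :
    ¬ ∀ z, sN2 z = 0 := by
  intro hN2
  have hS2 : ∀ w : ℂ, w ≠ 0 → sS2 w = 0 := fun w hw => by
    have h := (hrel w⁻¹ (inv_ne_zero hw)).2
    rw [hN2, inv_inv, zpow_neg_mul_zpow_mul (inv_ne_zero hw), eq_comm] at h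
    exact (mul_eq_zero.mp h).resolve_left (zpow_ne_zero _ (inv_ne_zero hw))
  have hN1 : sN1 0 = 0 := by
    refine hN1.eq_zero_of_eq_zpow_mul_comp_inv hS1.continuous.continuousAt (k := d₁ - d)
      (by omega) (fun z hz => ?_) 0
    rw [(hrel z hz).1, hS2 _ (inv_ne_zero hz), mul_zero, add_zero, zpow_neg_mul_zpow_mul hz]
  exact hNv.elim (· hN1) (· (hN2 0))

lemma HasLineSubbundleOfDeg.le_right (h12 : d₁ < d₂) (h : HasLineSubbundleOfDeg d₁ d₂ a d) :
    d ≤ d₂ := by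
  by_contra! hd
  obtain ⟨sN1, sN2, sS1, sS2, hN1, hN2, hS1, hS2, hNv, -, hrel⟩ := h
  refine north_snd_ne_zero_of_lt (h12.trans hd) hN1 hS1 (hNv 0) hrel fun z => ?_
  refine hN2.eq_zero_of_eq_zpow_mul_comp_inv hS2.continuous.continuousAt (k := d₂ - d)
    (by omega) (fun w hw => ?_) z
  rw [(hrel w hw).2, zpow_neg_mul_zpow_mul hw]

lemma HasLineSubbundleOfDeg.splitsHolomorphically (h12 : d₁ < d₂)
    (h : HasLineSubbundleOfDeg d₁ d₂ a d₂) : SplitsHolomorphically d₁ d₂ a := by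
  obtain ⟨sN1, sN2, sS1, sS2, hN1, hN2, hS1, hS2, hNv, -, hrel⟩ := h
  have hrel2 : ∀ z : ℂ, z ≠ 0 → sN2 z = sS2 z⁻¹ := fun z hz => by
    rw [(hrel z hz).2, zpow_neg_mul_zpow_mul hz, sub_self, zpow_zero, one_mul]
  set c := sS2 0
  have hN2c : ∀ z, sN2 z = c := hN2.eq_of_eq_comp_inv hS2.continuous.continuousAt hrel2
  have hS2c : ∀ w : ℂ, w ≠ 0 → sS2 w = c := fun w hw => by
    rw [← hN2c w⁻¹, hrel2 _ (inv_ne_zero hw), inv_inv]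
  have hc : c ≠ 0 := fun hc =>
    north_snd_ne_zero_of_lt h12 hN1 hS1 (hNv 0) hrel fun z => (hN2c z).trans hc
  refine ⟨fun z => c⁻¹ * sN1 z, fun z => c⁻¹ * sS1 z, (differentiable_const _).mul hN1,
    (differentiable_const _).mul hS1, fun z hz => ?_⟩
  have h1 := (hrel z hz).1
  rw [hS2c _ (inv_ne_zero hz)] at h1
  simp only [h1, zpow_neg]
  field_simp
  ring

end Subbundle

theorem divE_eq_max_iff_split_general
    (d₁ d₂ : ℤ) (h12 : d₁ < d₂)
    (a : ℂ → ℂ) :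
    sSup {d : ℤ | HasLineSubbundleOfDeg d₁ d₂ a d} = max d₁ d₂ ↔
    ∃ bN bS : ℂ → ℂ, Differentiable ℂ bN ∧ Differentiable ℂ bS ∧
      ∀ z : ℂ, z ≠ 0 → a z = z ^ d₂ * bN z - z ^ d₁ * bS z⁻¹ := by
  set S := {d : ℤ | HasLineSubbundleOfDeg d₁ d₂ a d}
  have hupper : d₂ ∈ upperBounds S := fun _ hd => hd.le_right h12
  rw [max_eq_right h12.le]
  refine ⟨fun h => ?_, fun h =>
    IsGreatest.csSup_eq ⟨SplitsHolomorphically.hasLineSubbundleOfDeg h, hupper⟩⟩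
  have hmem : d₂ ∈ S := h ▸ Int.csSup_mem ⟨d₁, hasLineSubbundleOfDeg_left d₁ d₂ a⟩ ⟨d₂, hupper⟩
  exact hmem.splitsHolomorphically h12

theorem divE_eq_max_iff_split
    (d₁ d₂ : ℤ) (h12 : d₁ < d₂)
    (a : ℂ → ℂ) (ha : DifferentiableOn ℂ a {z : ℂ | z ≠ 0}) :
    sSup {d : ℤ | HasLineSubbundleOfDeg d₁ d₂ a d} = max d₁ d₂ ↔
    ∃ bN bS : ℂ → ℂ, Differentiable ℂ bN ∧ Differentiable ℂ bS ∧
      ∀ z : ℂ, z ≠ 0 → a z = z ^ d₂ * bN z - z ^ d₁ * bS z⁻¹ :=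
  divE_eq_max_iff_split_general d₁ d₂ h12 a
end

section
/- Let f(w) = ∫_{S²} ρ(w′) · ww′/(w − w′) dν(w′) where ρ(w′) = (w′)^{k−2} M(w′) with M bounded on {|w′| ≤ 2} and ρ integrable, k ≥ 2. Then f can be written near w = 0 as f = O − p_f, where p_f(w) = Σ_{j=1}^{k−1} b_j w^j with b_j = ∫_{S²} ρ(w′)(w′)^{−j+1} dν(w′), and O satisfies |O(w)| ≤ C|w|^k for |w| ≤ 1 and some constant C > 0. -/
/-!
STATEMENT 13 (polynomial part of f(w) = ∫ ρ(w′)·ww′/(w−w′) dν(w′)).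
ν is the area measure of the round sphere of total area 1; in the chart w it
is `dν = sphDens·dA` with `sphDens w = (π(1+|w|²)²)⁻¹`.  Given
ρ(w′) = (w′)^{k−2}·M(w′) with M bounded on {|w′| ≤ 2} and the integrability
stated below, set b_j = ∫ ρ(w′)(w′)^{−j+1} dν(w′) for 1 ≤ j ≤ k−1 and
p_f(w) = Σ_{j=1}^{k−1} b_j w^j.  Then O = f + p_f satisfies |O(w)| ≤ C|w|^k
on |w| ≤ 1 for some C > 0, i.e. f = O − p_f.
-/

open MeasureTheory

/-- Density of the spherical area measure (sphere of area 1) against planar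
Lebesgue measure in a stereographic chart. -/
noncomputable def sphDens (w : ℂ) : ℝ :=
  (Real.pi * (1 + ‖w‖ ^ 2) ^ 2)⁻¹

/-!
Summing a geometric series, `w w'/(w - w') + ∑_{j=1}^{k-1} w'^{1-j} w^j = w^k w'^{2-k}/(w - w')`,
so `f + p_f = w^k ∫ ρ(w') w'^{2-k} (w - w')⁻¹ dν`, and it suffices to bound this last integral
uniformly for `|w| ≤ 1`. Where `|w'| ≤ 2` its integrand is at most `sup |M| / (π |w - w'|)`, and
`1/|u|` is locally integrable in the plane; where `|w'| > 2` we have `|w - w'| ≥ |w'|/2`, so the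
integrand is dominated by `2 |ρ(w') w'^{1-k}|`, which is integrable by hypothesis.
-/

open Metric Set

theorem mul_div_sub_add_sum_zpow_mul_pow {K : Type*} [Field K] (m : ℕ) {w z : K}
    (hz : z ≠ 0) (hwz : w - z ≠ 0) :
    w * z / (w - z) + ∑ j ∈ Finset.Icc 1 (m + 1), z ^ (1 - (j : ℤ)) * w ^ j =
      w ^ (m + 2) * (z ^ (-(m : ℤ)) * (w - z)⁻¹) := by
  induction m with
  | zero =>
    simp only [zero_add, Finset.Icc_self, Finset.sum_singleton, Nat.cast_one, sub_self,
      zpow_zero, one_mul, pow_one, Nat.cast_zero, neg_zero]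
    field_simp
    ring
  | succ n ih =>
    rw [Finset.sum_Icc_succ_top (by omega), ← add_assoc, ih,
      show (1 - ((n + 1 + 1 : ℕ) : ℤ)) = -((n + 1 : ℕ) : ℤ) by push_cast; ring]
    simp only [zpow_neg, zpow_natCast]
    field_simp
    ring

theorem integral_mul_cauchy_add_sum_moments {μ : Measure ℂ} [NullSingletonClass μ] {F : ℂ → ℂ}
    (m : ℕ) (w : ℂ) (hker : Integrable (fun z => F z * (w * z / (w - z))) μ)
    (hmom : ∀ j ∈ Finset.Icc 1 (m + 1), Integrable (fun z => F z * z ^ (1 - (j : ℤ))) μ) :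
    (∫ z, F z * (w * z / (w - z)) ∂μ) +
        ∑ j ∈ Finset.Icc 1 (m + 1), (∫ z, F z * z ^ (1 - (j : ℤ)) ∂μ) * w ^ j =
      w ^ (m + 2) * ∫ z, F z * z ^ (-(m : ℤ)) * (w - z)⁻¹ ∂μ := by
  have hterm := fun j hj => (hmom j hj).mul_const (w ^ j)
  rw [← integral_const_mul]
  simp_rw [← integral_mul_const]
  rw [← integral_finsetSum _ hterm, ← integral_add hker (integrable_finsetSum _ hterm)]
  refine integral_congr_ae ?_
  filter_upwards [μ.ae_ne 0, μ.ae_ne w] with z hz hzw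
  have key := mul_div_sub_add_sum_zpow_mul_pow m hz (sub_ne_zero.mpr hzw.symm)
  simp only [mul_assoc, ← Finset.mul_sum, ← mul_add, key]
  ring

theorem locallyIntegrable_inv_norm {E : Type*} [NormedAddCommGroup E] [NormedSpace ℝ E]
    [FiniteDimensional ℝ E] [MeasurableSpace E] [BorelSpace E] {μ : Measure E}
    [μ.IsAddHaarMeasure] (hE : 2 ≤ Module.finrank ℝ E) :
    LocallyIntegrable (fun x : E => ‖x‖⁻¹) μ := by
  refine locallyIntegrable_of_norm_le_rpow (C := 1) (α := 1) (by omega) (by norm_cast)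
    (Filter.Eventually.of_forall fun x => ?_) (by fun_prop)
  simp [Real.rpow_neg_one]

theorem norm_inv_sub_le_two_mul_norm_inv {𝕜 : Type*} [NormedDivisionRing 𝕜] {w z : 𝕜} {r : ℝ}
    (hw : ‖w‖ ≤ r) (hz : 2 * r < ‖z‖) : ‖(w - z)⁻¹‖ ≤ 2 * ‖z⁻¹‖ := by
  have hz' : 0 < ‖z‖ / 2 := by linarith [norm_nonneg w]
  have hwz : ‖z‖ / 2 ≤ ‖w - z‖ := by
    linarith [norm_sub_norm_le z w, norm_sub_rev w z]
  rw [norm_inv, norm_inv, ← div_eq_mul_inv, ← inv_div]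
  exact inv_anti₀ hz' hwz

theorem norm_integral_mul_inv_sub_le {g : ℂ → ℂ} {c r : ℝ}
    (hnear : ∀ z, ‖z‖ ≤ 2 * r → ‖g z‖ ≤ c) (hfar : Integrable fun z => g z * z⁻¹)
    {w : ℂ} (hw : ‖w‖ ≤ r) :
    ‖∫ z, g z * (w - z)⁻¹‖ ≤
      c * (∫ u in closedBall (0 : ℂ) (3 * r), ‖u‖⁻¹) + 2 * ∫ z, ‖g z * z⁻¹‖ := by
  set φ : ℂ → ℝ := (closedBall 0 (3 * r)).indicator fun u => ‖u‖⁻¹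
  have hφ : Integrable φ := (integrable_indicator_iff measurableSet_closedBall).2 <|
    (locallyIntegrable_inv_norm Complex.finrank_real_complex.ge).integrableOn_isCompact
      (isCompact_closedBall 0 _)
  have hφ_nonneg : ∀ u, 0 ≤ φ u := indicator_nonneg fun u _ => by positivity
  have hc : 0 ≤ c := (norm_nonneg _).trans (hnear 0 (by simp; linarith [norm_nonneg w]))
  have hmaj : Integrable fun z => c * φ (w - z) + 2 * ‖g z * z⁻¹‖ :=
    ((hφ.comp_sub_left w).const_mul c).add (hfar.norm.const_mul 2)
  have hdom : ∀ z, ‖g z * (w - z)⁻¹‖ ≤ c * φ (w - z) + 2 * ‖g z * z⁻¹‖ := by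
    intro z
    rcases le_or_gt ‖z‖ (2 * r) with hz | hz
    · have hball : w - z ∈ closedBall (0 : ℂ) (3 * r) := by
        rw [mem_closedBall_zero_iff]
        linarith [norm_sub_le w z]
      calc ‖g z * (w - z)⁻¹‖ = ‖g z‖ * ‖w - z‖⁻¹ := by rw [norm_mul, norm_inv]
        _ ≤ c * φ (w - z) := by
          rw [show φ (w - z) = ‖w - z‖⁻¹ from indicator_of_mem hball _]
          gcongr
          exact hnear z hz
        _ ≤ _ := by linarith [norm_nonneg (g z * z⁻¹)]
    · calc ‖g z * (w - z)⁻¹‖ ≤ ‖g z‖ * (2 * ‖z⁻¹‖) := by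
            rw [norm_mul]
            gcongr
            exact norm_inv_sub_le_two_mul_norm_inv hw hz
        _ = 2 * ‖g z * z⁻¹‖ := by rw [norm_mul]; ring
        _ ≤ _ := by linarith [mul_nonneg hc (hφ_nonneg (w - z))]
  calc ‖∫ z, g z * (w - z)⁻¹‖ ≤ ∫ z, (c * φ (w - z) + 2 * ‖g z * z⁻¹‖) :=
        norm_integral_le_of_norm_le hmaj (Filter.Eventually.of_forall hdom)
    _ = _ := by
      rw [integral_add ((hφ.comp_sub_left w).const_mul c) (hfar.norm.const_mul 2),
        integral_const_mul, integral_const_mul, integral_sub_left_eq_self φ volume w,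
        integral_indicator measurableSet_closedBall]

theorem sphDens_le_inv_pi (w : ℂ) : sphDens w ≤ Real.pi⁻¹ := by
  unfold sphDens
  gcongr
  exact le_mul_of_one_le_right Real.pi_pos.le (one_le_pow₀ (by simp))

theorem norm_pow_mul_mul_zpow_neg_le {K : Type*} [NormedField K] (m : ℕ) (z a : K) :
    ‖z ^ m * a * z ^ (-(m : ℤ))‖ ≤ ‖a‖ := by
  rcases eq_or_ne z 0 with rfl | hz
  · rcases Nat.eq_zero_or_pos m with rfl | hm
    · simp
    · simp [zero_pow hm.ne']
  · rw [zpow_neg, zpow_natCast, mul_comm (z ^ m), mul_assoc, mul_inv_cancel₀ (pow_ne_zero m hz),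
      mul_one]

theorem polynomial_part_of_cauchy_type_integral
    (k : ℕ) (hk : 2 ≤ k) (ρ M : ℂ → ℂ)
    (hρM : ∀ w' : ℂ, ρ w' = w' ^ (k - 2) * M w')
    (hM : ∃ B : ℝ, ∀ w' : ℂ, ‖w'‖ ≤ 2 → ‖M w'‖ ≤ B)
    -- integrability of the moment integrands (this includes the b_j's and
    -- the term ρ/(w′)^{k−1} used at the south chart):
    (hint : ∀ j : ℤ, 0 ≤ j → j ≤ (k : ℤ) - 1 →
      Integrable (fun w' : ℂ => sphDens w' • (ρ w' * w' ^ (-j))))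
    -- integrability of the Cauchy-type kernel against ρ:
    (hker : ∀ w : ℂ,
      Integrable (fun w' : ℂ => sphDens w' • (ρ w' * (w * w' / (w - w'))))) :
    ∃ C : ℝ, 0 < C ∧ ∀ w : ℂ, ‖w‖ ≤ 1 →
      ‖(∫ w' : ℂ, sphDens w' • (ρ w' * (w * w' / (w - w')))) +
        ∑ j ∈ Finset.Icc 1 (k - 1),
          (∫ w' : ℂ, sphDens w' • (ρ w' * w' ^ (1 - (j : ℤ)))) * w ^ j‖ ≤
      C * ‖w‖ ^ k := by
  obtain ⟨m, rfl⟩ : ∃ m, k = m + 2 := ⟨k - 2, by omega⟩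
  obtain ⟨B, hB⟩ := hM
  simp only [Nat.add_sub_cancel] at hρM
  simp only [← smul_mul_assoc] at hint hker ⊢
  have hnear : ∀ z : ℂ, ‖z‖ ≤ 2 → ‖sphDens z • ρ z * z ^ (-(m : ℤ))‖ ≤ Real.pi⁻¹ * B := by
    intro z hz
    rw [smul_mul_assoc, norm_smul, Real.norm_of_nonneg (by unfold sphDens; positivity), hρM]
    exact mul_le_mul (sphDens_le_inv_pi z) ((norm_pow_mul_mul_zpow_neg_le m z (M z)).trans
      (hB z hz)) (norm_nonneg _) (by positivity)
  have hfar : Integrable fun z : ℂ => sphDens z • ρ z * z ^ (-(m : ℤ)) * z⁻¹ := by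
    refine (hint (m + 1) (by positivity) (by push_cast; omega)).congr
      (Filter.Eventually.of_forall fun z => ?_)
    simp only [mul_assoc, zpow_neg, zpow_natCast, ← mul_inv, ← pow_succ]
    norm_cast
  have hmom : ∀ j ∈ Finset.Icc 1 (m + 1),
      Integrable fun z : ℂ => sphDens z • ρ z * z ^ (1 - (j : ℤ)) := by
    intro j hj
    rw [Finset.mem_Icc] at hj
    simpa using hint (j - 1) (by omega) (by push_cast; omega)
  obtain ⟨A, hA⟩ : ∃ A, ∀ w : ℂ, ‖w‖ ≤ 1 →
      ‖∫ z, sphDens z • ρ z * z ^ (-(m : ℤ)) * (w - z)⁻¹‖ ≤ A :=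
    ⟨_, fun w hw => norm_integral_mul_inv_sub_le (r := 1) (fun z hz => hnear z (by linarith))
      hfar hw⟩
  refine ⟨max A 0 + 1, by positivity, fun w hw => ?_⟩
  rw [show m + 2 - 1 = m + 1 from rfl, integral_mul_cauchy_add_sum_moments m w (hker w) hmom,
    norm_mul, norm_pow, mul_comm]
  gcongr
  linarith [hA w hw, le_max_left A 0]
end

section
/- Suppose u is a rotationally symmetric solution (about the axis through x₀) of Δu + |φ|₀² e^{2u} − 4π = 0 on S², where φ is a holomorphic section of L ⊗ T^{1,0}S² with divisor (k−2)x₀, k > 2, and |φ|₀ is its norm in the round metric H₀. Then the coefficients b_j = ∫_{S²} |φ|²_{H_u} g^{−1} w^{−j+1} dν computed in the stereographic chart w centered so that w(x₀) = ∞ satisfy b₁ ≠ 0 and b_j = 0 for 2 ≤ j ≤ k−1. -/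
/-!
STATEMENT 18 (vanishing of the coefficients b_j for a rotationally symmetric
solution).  With φ = g·ζ_L dz having divisor (k−2)x₀ one may choose the
stereographic chart w with w(−x₀) = 0 (so all zeros of φ sit at w = ∞) and
the trivialization so that g is constant; then the integrand of
b_j = ∫ |φ|²_{H_u} g⁻¹ w^{−j+1} dν is G(w)·w^{1−j} where
G = |φ|²_{H_u}/g = |ζ_L dz|²_{H₀} e^{2u} (in the chart) is a positive
function which, since u is invariant under the rotations about the axis
through x₀, is rotationally invariant: G(e^{iθ}w) = G(w).  ν is the round
area measure of total mass 1, dν = sphDens·dA.  Conclusion: b₁ ≠ 0 and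
b_j = 0 for 2 ≤ j ≤ k−1.
-/

open MeasureTheory

/-!
Rotating the plane by `c` on the unit circle preserves Lebesgue measure, `sphDens` and `G`, and
multiplies the integrand `sphDens w • (G w * w ^ (1 - j))` of `b j` by `c ^ (1 - j)`. Hence
`b j = c ^ (1 - j) * b j` for every `c`; for `j ≠ 1` some `c` has `c ^ (1 - j) = -1`, so `b j = 0`.
For `j = 1` the integrand is the positive function `sphDens * G`, so `b 1 > 0`.
-/

lemma sphDens_pos (w : ℂ) : 0 < sphDens w := by
  unfold sphDens
  positivity

lemma sphDens_circle_mul (c : Circle) (w : ℂ) : sphDens (c * w) = sphDens w := by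
  rw [sphDens, norm_mul, Circle.norm_coe, one_mul, sphDens]

lemma integral_pos_of_forall_pos {α : Type*} [MeasurableSpace α] {μ : Measure α} [NeZero μ]
    {f : α → ℝ} (hf : Integrable f μ) (hpos : ∀ x, 0 < f x) : 0 < ∫ x, f x ∂μ := by
  rw [integral_pos_iff_support_of_nonneg (fun x ↦ (hpos x).le) hf,
    Function.support_eq_univ fun x ↦ (hpos x).ne']
  exact Measure.measure_univ_pos.2 (NeZero.ne μ)

lemma Circle.exists_zpow_eq_neg_one {m : ℤ} (hm : m ≠ 0) : ∃ c : Circle, c ^ m = -1 :=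
  ⟨Circle.exp (Real.pi / m), by
    rw [← Circle.exp_intCast_mul, mul_div_cancel₀ _ (Int.cast_ne_zero.2 hm)]
    ext
    simp [Circle.coe_exp]⟩

lemma integral_circle_mul {E : Type*} [NormedAddCommGroup E] [NormedSpace ℝ E]
    (c : Circle) (f : ℂ → E) : ∫ w, f (c * w) = ∫ w, f w := by
  simpa [rotation_apply] using
    (rotation c).measurePreserving.integral_comp (rotation c).toHomeomorph.measurableEmbedding f

lemma integral_eq_zero_of_circle_mul_eq_zpow_smul {E : Type*} [NormedAddCommGroup E]
    [NormedSpace ℂ E] {F : ℂ → E} {m : ℤ} (hm : m ≠ 0)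
    (hF : ∀ (c : Circle) (w : ℂ), F (c * w) = (c : ℂ) ^ m • F w) : ∫ w, F w = 0 := by
  obtain ⟨c, hc⟩ := Circle.exists_zpow_eq_neg_one hm
  have hneg : ∫ w, F w = -∫ w, F w := calc
    ∫ w, F w = ∫ w, F (c * w) := (integral_circle_mul c F).symm
    _ = ∫ w, (c : ℂ) ^ m • F w := by simp only [hF]
    _ = -∫ w, F w := by rw [integral_smul, ← Circle.coe_zpow, hc, Circle.coe_neg,
        Circle.coe_one, neg_one_smul]
  have : IsAddTorsionFree E := .of_isTorsionFree ℂ E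
  exact self_eq_neg.1 hneg

theorem coefficients_of_radial_solution
    (k : ℕ) (hk : 2 < k) (G : ℂ → ℝ)
    (hGpos : ∀ w : ℂ, 0 < G w)
    -- rotational symmetry of |φ|₀² and of the solution u about the axis
    (hGsym : ∀ (θ : ℝ) (w : ℂ), G (Complex.exp (θ * Complex.I) * w) = G w)
    (hGint : ∀ j : ℕ, 1 ≤ j → j ≤ k - 1 →
      Integrable (fun w : ℂ => sphDens w • ((G w : ℂ) * w ^ (1 - (j : ℤ)))))
    (b : ℕ → ℂ)
    (hb : ∀ j : ℕ, b j = ∫ w : ℂ, sphDens w • ((G w : ℂ) * w ^ (1 - (j : ℤ)))) :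
    b 1 ≠ 0 ∧ ∀ j : ℕ, 2 ≤ j → j ≤ k - 1 → b j = 0 := by
  have hb1 : b 1 = ((∫ w : ℂ, sphDens w * G w : ℝ) : ℂ) := by
    simp [hb, ← integral_complex_ofReal]
  have hint1 : Integrable (fun w : ℂ ↦ sphDens w * G w) := by
    simpa [Complex.real_smul] using (hGint 1 le_rfl (by omega)).re
  refine ⟨?_, fun j hj _ ↦ ?_⟩
  · rw [hb1, Complex.ofReal_ne_zero]
    exact (integral_pos_of_forall_pos hint1 fun w ↦ mul_pos (sphDens_pos w) (hGpos w)).ne'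
  · rw [hb]
    refine integral_eq_zero_of_circle_mul_eq_zpow_smul (m := 1 - j) (by omega) fun c w ↦ ?_
    obtain ⟨θ, rfl⟩ := Circle.exp_surjective c
    rw [sphDens_circle_mul, Circle.coe_exp, hGsym, mul_zpow, smul_comm, smul_eq_mul, mul_left_comm]
end
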